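/- Let A be a finite set of atomic formulas. For any finite nonempty set X of A-contexts and any A-context C: C ⊩⁺ ξ_X if and only if C ∈ X, where for X = {C₁,…,C_k}, ξ_X := μ_{C₁} ∨ … ∨ μ_{C_k}. -/
import Mathlib


namespace LAD

/-- L-formulas: built from atoms by extensional connectives ⊃, ∩, ∪, ∼. -/
inductive LForm (A : Type) where
  | atom : A → LForm A
  | eimp : LForm A → LForm A → LForm A
  | econj : LForm A → LForm A → LForm A
  | edisj : LForm A → LForm A → LForm A
  | eneg : LForm A → LForm A

/-- L*-formulas: L-formulas closed under intensional connectives →, ∧, ∨, ¬. -/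
inductive SForm (A : Type) where
  | base : LForm A → SForm A
  | iimp : SForm A → SForm A → SForm A
  | iconj : SForm A → SForm A → SForm A
  | idisj : SForm A → SForm A → SForm A
  | ineg : SForm A → SForm A

variable {A : Type}

/-- A possible world: an assignment of truth values to atoms. -/
abbrev World (A : Type) := A → Bool

/-- A context is a (nonempty) set of possible worlds. -/
abbrev Context (A : Type) := Set (World A)

/-- Classical truth of an L-formula at a world. -/
def LForm.truth (w : World A) : LForm A → Bool
  | .atom a => w a
  | .eimp α β => !α.truth w || β.truth w
  | .econj α β => α.truth w && β.truth w
  | .edisj α β => α.truth w || β.truth w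
  | .eneg α => !α.truth w

/-- Assertibility and deniability conditions, as a pair (⊩⁺, ⊩⁻). -/
def SForm.sem : SForm A → Context A → Prop × Prop
  | .base α, C => (∀ w ∈ C, α.truth w = true, ∀ w ∈ C, α.truth w = false)
  | .ineg φ, C => ((φ.sem C).2, (φ.sem C).1)
  | .idisj φ ψ, C => ((φ.sem C).1 ∨ (ψ.sem C).1, (φ.sem C).2 ∧ (ψ.sem C).2)
  | .iconj φ ψ, C => ((φ.sem C).1 ∧ (ψ.sem C).1, (φ.sem C).2 ∨ (ψ.sem C).2)
  | .iimp φ ψ, C =>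
      (∀ D : Context A, D.Nonempty → D ⊆ C → (φ.sem D).1 → (ψ.sem D).1,
       ∃ D : Context A, D.Nonempty ∧ D ⊆ C ∧ (φ.sem D).1 ∧ (ψ.sem D).2)

/-- C ⊩⁺ φ : assertibility. -/
def Assert (C : Context A) (φ : SForm A) : Prop := (φ.sem C).1

/-- C ⊩⁻ φ : deniability. -/
def Deny (C : Context A) (φ : SForm A) : Prop := (φ.sem C).2

/-- Δ ⊨ ψ : assertibility-preserving consequence. -/
def Entails (Δ : Set (SForm A)) (ψ : SForm A) : Prop :=
  ∀ C : Context A, C.Nonempty → (∀ δ ∈ Δ, Assert C δ) → Assert C ψ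


/-- ⊥ := p ∩ ∼p for a fixed atom p. -/
def botF (p : A) : SForm A := .base (.econj (.atom p) (.eneg (.atom p)))

/-- ◇φ := ¬(φ → ⊥). -/
def dia (p : A) (φ : SForm A) : SForm A := .ineg (.iimp φ (botF p))

/-- Iterated extensional conjunction of a list (true if empty). -/
def bigEConj (p : A) : List (LForm A) → LForm A
  | [] => .eimp (.atom p) (.atom p)
  | h :: t => t.foldl LForm.econj h

/-- Iterated extensional disjunction of a list (false if empty). -/
def bigEDisj (p : A) : List (LForm A) → LForm A
  | [] => .econj (.atom p) (.eneg (.atom p))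
  | h :: t => t.foldl LForm.edisj h

/-- Iterated intensional conjunction of a list (true if empty). -/
def bigIConj (p : A) : List (SForm A) → SForm A
  | [] => .base (.eimp (.atom p) (.atom p))
  | h :: t => t.foldl SForm.iconj h

/-- Iterated intensional disjunction of a list (⊥ if empty). -/
def bigIDisj (p : A) : List (SForm A) → SForm A
  | [] => botF p
  | h :: t => t.foldl SForm.idisj h

/-- α₁ ⊕ … ⊕ αₙ := (α₁ ∪ … ∪ αₙ) ∧ (◇α₁ ∧ … ∧ ◇αₙ). -/
def oplus (p : A) (l : List (LForm A)) : SForm A :=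
  .iconj (.base (bigEDisj p l)) (bigIConj p (l.map fun α => dia p (.base α)))

/-- σ_w : the canonical description of a world w (A finite). -/
noncomputable def sigmaW [Fintype A] [DecidableEq A] (p : A) (w : World A) : LForm A :=
  bigEConj p ((Finset.univ : Finset A).toList.map
    (fun a => if w a then LForm.atom a else .eneg (.atom a)))

/-- μ_C := σ_{w₁} ⊕ … ⊕ σ_{wₙ} for a finite context C = {w₁,…,wₙ}. -/
noncomputable def mu [Fintype A] [DecidableEq A] (p : A) (C : Finset (World A)) : SForm A :=
  oplus p (C.toList.map (sigmaW p))

/-- ξ_X := μ_{C₁} ∨ … ∨ μ_{C_k} for a finite set X = {C₁,…,C_k} of contexts. -/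
noncomputable def xi [Fintype A] [DecidableEq A] (p : A) (X : Finset (Finset (World A))) : SForm A :=
  bigIDisj p (X.toList.map (mu p))

lemma truth_foldl_econj (w : World A) (t : List (LForm A)) (h : LForm A) :
    (t.foldl LForm.econj h).truth w = (h.truth w && t.all (·.truth w)) := by
  induction t generalizing h with
  | nil => simp
  | cons a t ih => simp [ih, LForm.truth, Bool.and_assoc]

lemma truth_foldl_edisj (w : World A) (t : List (LForm A)) (h : LForm A) :
    (t.foldl LForm.edisj h).truth w = (h.truth w || t.any (·.truth w)) := by
  induction t generalizing h with
  | nil => simp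
  | cons a t ih => simp [ih, LForm.truth, Bool.or_assoc]

lemma truth_bigEDisj (w : World A) (p : A) (l : List (LForm A)) :
    (bigEDisj p l).truth w = l.any (·.truth w) := by
  cases l with
  | nil => simp [bigEDisj, LForm.truth]
  | cons h t => simp [bigEDisj, truth_foldl_edisj, LForm.truth]

lemma truth_bigEConj (w : World A) (p : A) (l : List (LForm A)) :
    (bigEConj p l).truth w = l.all (·.truth w) := by
  cases l with
  | nil => simp [bigEConj, LForm.truth]
  | cons h t => simp [bigEConj, truth_foldl_econj, LForm.truth]

lemma truth_sigmaW [Fintype A] [DecidableEq A] (p : A) (w w' : World A) :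
    (sigmaW p w).truth w' = true ↔ w' = w := by
  rw [sigmaW, truth_bigEConj]
  simp only [List.all_eq_true, List.mem_map, Finset.mem_toList, Finset.mem_univ, true_and]
  constructor
  · intro h
    funext a
    have := h _ ⟨a, rfl⟩
    by_cases hw : w a <;> simp [hw, LForm.truth] at this <;> simp [this, hw]
  · rintro rfl _ ⟨a, rfl⟩
    by_cases hw : w' a <;> simp [hw, LForm.truth]

lemma sem_foldl_iconj (C : Context A) (t : List (SForm A)) (h : SForm A) :
    ((t.foldl SForm.iconj h).sem C).1 ↔ (h.sem C).1 ∧ ∀ φ ∈ t, (φ.sem C).1 := by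
  induction t generalizing h with
  | nil => simp
  | cons a t ih =>
    simp only [List.foldl_cons, ih, SForm.sem, List.mem_cons]
    constructor
    · rintro ⟨⟨h1, h2⟩, h3⟩
      exact ⟨h1, fun φ hφ => hφ.elim (fun e => e ▸ h2) (h3 φ)⟩
    · rintro ⟨h1, h2⟩
      exact ⟨⟨h1, h2 a (Or.inl rfl)⟩, fun φ hφ => h2 φ (Or.inr hφ)⟩

lemma sem_foldl_idisj (C : Context A) (t : List (SForm A)) (h : SForm A) :
    ((t.foldl SForm.idisj h).sem C).1 ↔ (h.sem C).1 ∨ ∃ φ ∈ t, (φ.sem C).1 := by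
  induction t generalizing h with
  | nil => simp
  | cons a t ih =>
    simp only [List.foldl_cons, ih, SForm.sem, List.mem_cons]
    constructor
    · rintro (⟨h1 | h1⟩ | ⟨φ, hφ, h1⟩)
      · exact Or.inl h1
      · exact Or.inr ⟨a, Or.inl rfl, h1⟩
      · exact Or.inr ⟨φ, Or.inr hφ, h1⟩
    · rintro (h1 | ⟨φ, hφ | hφ, h1⟩)
      · exact Or.inl (Or.inl h1)
      · exact Or.inl (Or.inr (hφ ▸ h1))
      · exact Or.inr ⟨φ, hφ, h1⟩

lemma assert_bigIConj (p : A) (C : Context A) (l : List (SForm A)) :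
    ((bigIConj p l).sem C).1 ↔ ∀ φ ∈ l, (φ.sem C).1 := by
  cases l with
  | nil => simp [bigIConj, SForm.sem, LForm.truth]
  | cons h t =>
    rw [bigIConj, sem_foldl_iconj]
    simp only [List.mem_cons]
    constructor
    · rintro ⟨h1, h2⟩ φ (rfl | hφ)
      · exact h1
      · exact h2 φ hφ
    · intro h1
      exact ⟨h1 h (Or.inl rfl), fun φ hφ => h1 φ (Or.inr hφ)⟩

lemma assert_bigIDisj (p : A) (C : Context A) (hC : C.Nonempty) (l : List (SForm A)) :
    ((bigIDisj p l).sem C).1 ↔ ∃ φ ∈ l, (φ.sem C).1 := by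
  cases l with
  | nil =>
    simp only [bigIDisj, botF, SForm.sem, List.not_mem_nil, false_and, exists_false,
      iff_false]
    intro h
    obtain ⟨w, hw⟩ := hC
    have := h w hw
    simp [LForm.truth] at this
  | cons h t =>
    rw [bigIDisj, sem_foldl_idisj]
    simp only [List.mem_cons]
    constructor
    · rintro (h1 | ⟨φ, hφ, h1⟩)
      · exact ⟨h, Or.inl rfl, h1⟩
      · exact ⟨φ, Or.inr hφ, h1⟩
    · rintro ⟨φ, rfl | hφ, h1⟩
      · exact Or.inl h1
      · exact Or.inr ⟨φ, hφ, h1⟩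

lemma assert_dia_base (p : A) (C : Context A) (α : LForm A) :
    ((dia p (.base α)).sem C).1 ↔ ∃ w ∈ C, α.truth w = true := by
  simp only [dia, botF, SForm.sem]
  constructor
  · rintro ⟨D, ⟨w, hw⟩, hDC, h1, _⟩
    exact ⟨w, hDC hw, h1 w hw⟩
  · rintro ⟨w, hwC, hw⟩
    refine ⟨{w}, ⟨w, rfl⟩, by simpa using hwC, ?_, ?_⟩
    · rintro w' rfl; exact hw
    · rintro w' rfl; simp [LForm.truth]

lemma assert_mu_iff [Fintype A] [DecidableEq A] (p : A)
    (D : Finset (World A)) (C : Finset (World A)) (hC : C.Nonempty) :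
    Assert (↑C) (mu p D) ↔ C = D := by
  rw [Assert, mu, oplus]
  show ((SForm.base _).sem _).1 ∧ _ ↔ _
  rw [assert_bigIConj]
  simp only [SForm.sem]
  constructor
  · rintro ⟨h1, h2⟩
    apply Finset.Subset.antisymm
    · intro w hw
      have := h1 w hw
      rw [truth_bigEDisj] at this
      simp only [List.any_eq_true, List.mem_map, Finset.mem_toList] at this
      obtain ⟨_, ⟨u, hu, rfl⟩, ht⟩ := this
      rw [truth_sigmaW] at ht
      exact ht ▸ hu
    · intro u hu
      have := h2 (dia p (.base (sigmaW p u)))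
        (by simp only [List.map_map, List.mem_map, Finset.mem_toList]
            exact ⟨u, hu, rfl⟩)
      rw [assert_dia_base] at this
      obtain ⟨w, hwC, hw⟩ := this
      rw [truth_sigmaW] at hw
      exact hw ▸ hwC
  · rintro rfl
    constructor
    · intro w hw
      rw [truth_bigEDisj]
      simp only [List.any_eq_true, List.mem_map, Finset.mem_toList]
      exact ⟨_, ⟨w, hw, rfl⟩, (truth_sigmaW p w w).mpr rfl⟩
    · intro φ hφ
      simp only [List.map_map, List.mem_map, Finset.mem_toList] at hφ
      obtain ⟨u, hu, rfl⟩ := hφ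
      rw [Function.comp_apply, assert_dia_base]
      exact ⟨u, hu, (truth_sigmaW p u u).mpr rfl⟩

theorem assert_xi_iff_mem [Fintype A] [DecidableEq A] (p : A)
    (X : Finset (Finset (World A))) (hX : X.Nonempty)
    (hXne : ∀ D ∈ X, D.Nonempty)
    (C : Finset (World A)) (hC : C.Nonempty) :
    Assert (↑C) (xi p X) ↔ C ∈ X := by
  have hCne : (↑C : Context A).Nonempty := by
    obtain ⟨w, hw⟩ := hC; exact ⟨w, hw⟩
  rw [Assert, xi, assert_bigIDisj p _ hCne]
  simp only [List.mem_map, Finset.mem_toList]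
  constructor
  · rintro ⟨_, ⟨D, hD, rfl⟩, h1⟩
    have := (assert_mu_iff p D C hC).mp h1
    exact this ▸ hD
  · intro hCX
    exact ⟨mu p C, ⟨C, hCX, rfl⟩, (assert_mu_iff p C C hC).mpr rfl⟩

end LAD
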